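/- arXiv:math/0506274 — 2 statements merged into one kernel-verified Lean document; each statement's English description precedes it below -/
import Mathlib

section
/- For any non-negative integers a, b and any x, the double sum ∑_{m≥0} ∑_{k≥0} h_{m-2k}({1}^{k+a},{q}^{k+b}) x^k z^m equals 1/((1-z)^{a-1}(1-qz)^{b-1}) · 1/((1-z)(1-qz) - x z²) as formal power series in z. -/
/-! Write `F a b` for the double sum and `A a b = 1/((1-z)^a (1-qz)^b)`. Splitting off the
`k = 0` term gives `F a b = A a b + x z² F (a+1) (b+1)`, and `A a b = A (a+1) (b+1) (1-z)(1-qz)`.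
So the defect `F a b ((1-z)(1-qz) - x z²) - A a b (1-z)(1-qz)` is `x z²` times the defect at
`(a+1, b+1)`; iterating, it is divisible by every power of `z`, hence zero. -/

/-- `hh q r s n` is the complete homogeneous symmetric function `h_n({1}^r, {q}^s)`,
i.e. the coefficient of `z^n` in `1/((1-z)^r (1-qz)^s)`. -/
noncomputable def hh {K : Type*} [CommSemiring K] (q : K) (r s : ℕ) (n : ℕ) : K :=
  PowerSeries.coeff (R := K) n
    ((PowerSeries.mk fun _ => (1 : K)) ^ r * (PowerSeries.mk fun k => q ^ k) ^ s)

open PowerSeries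

namespace PowerSeries

theorem eq_zero_of_forall_X_mul_succ_dvd {R : Type*} [Semiring R] {d : ℕ → R⟦X⟧}
    (h : ∀ t, X * d (t + 1) ∣ d t) (t : ℕ) : d t = 0 := by
  have hpow : ∀ n t, (X : R⟦X⟧) ^ n ∣ d t := by
    intro n
    induction n with
    | zero => simp
    | succ n ih =>
      exact fun t => (pow_succ' (X : R⟦X⟧) n ▸ mul_dvd_mul_left X (ih (t + 1))).trans (h t)
  ext n
  exact X_pow_dvd_iff.mp (hpow (n + 1) t) n n.lt_succ_self

theorem mk_pow_mul_one_sub_C_mul_X_eq_one {R : Type*} [CommRing R] (q : R) :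
    (mk fun n => q ^ n) * (1 - C q * X) = 1 := by
  simpa [rescale_mk, rescale_X] using congrArg (rescale q) (mk_one_mul_one_sub_eq_one R)

end PowerSeries

noncomputable def hhDoubleSum {K : Type*} [CommSemiring K] (q x : K) (a b : ℕ) : K⟦X⟧ :=
  mk fun m => ∑ k ∈ Finset.range (m / 2 + 1), x ^ k * hh q (k + a) (k + b) (m - 2 * k)

theorem hhDoubleSum_eq_add {K : Type*} [CommSemiring K] (q x : K) (a b : ℕ) :
    hhDoubleSum q x a b =
      mk 1 ^ a * (mk fun n => q ^ n) ^ b + X ^ 2 * (C x * hhDoubleSum q x (a + 1) (b + 1)) := by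
  ext m
  rw [hhDoubleSum, coeff_mk, Finset.sum_range_succ', map_add, coeff_X_pow_mul', add_comm]
  simp only [pow_zero, one_mul, zero_add, Nat.mul_zero, Nat.sub_zero]
  congr 1
  split_ifs with hm
  · rw [coeff_C_mul, hhDoubleSum, coeff_mk, show (m - 2) / 2 + 1 = m / 2 by omega,
      Finset.mul_sum]
    refine Finset.sum_congr rfl fun k _ => ?_
    rw [show m - 2 * (k + 1) = m - 2 - 2 * k by omega, add_assoc k 1 a, add_comm 1 a,
      add_assoc k 1 b, add_comm 1 b, pow_succ', mul_assoc]
  · simp [show m / 2 = 0 by omega]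

theorem hhDoubleSum_mul {K : Type*} [CommRing K] (q x : K) (a b : ℕ) :
    hhDoubleSum q x a b * ((1 - X) * (1 - C q * X) - C x * X ^ 2) =
      mk 1 ^ a * (mk fun n => q ^ n) ^ b * ((1 - X) * (1 - C q * X)) := by
  set P : K⟦X⟧ := (1 - X) * (1 - C q * X)
  set A : ℕ → K⟦X⟧ := fun t => mk 1 ^ (a + t) * (mk fun n => q ^ n) ^ (b + t)
  set d : ℕ → K⟦X⟧ := fun t =>
    hhDoubleSum q x (a + t) (b + t) * (P - C x * X ^ 2) - A t * P
  have hd : ∀ t, X * d (t + 1) ∣ d t := by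
    intro t
    refine ⟨C x * X, ?_⟩
    have hG := mk_one_mul_one_sub_eq_one K
    have hH := mk_pow_mul_one_sub_C_mul_X_eq_one q
    have hF := hhDoubleSum_eq_add q x (a + t) (b + t)
    simp only [d, A, P, ← add_assoc] at hF ⊢
    linear_combination (P - C x * X ^ 2) * hF
      + C x * X ^ 2 * A t * ((mk fun n => q ^ n) * (1 - C q * X) * hG + hH)
  exact sub_eq_zero.mp (eq_zero_of_forall_X_mul_succ_dvd hd 0)

/-- `∑_{m≥0} ∑_{k≥0} h_{m-2k}({1}^{k+a},{q}^{k+b}) x^k z^m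
  = (1-z)^{1-a} (1-qz)^{1-b} / ((1-z)(1-qz) - x z²)`,
stated with denominators cleared (multiplying both sides by
`(1-z)^a (1-qz)^b ((1-z)(1-qz) - x z²)`). Terms with `m - 2k < 0` vanish, so the inner
sum is over `0 ≤ k ≤ ⌊m/2⌋`. -/
theorem double_sum_hh_identity {K : Type*} [CommRing K] (q x : K) (a b : ℕ) :
    (PowerSeries.mk fun m =>
        ∑ k ∈ Finset.range (m / 2 + 1), x ^ k * hh q (k + a) (k + b) (m - 2 * k)) *
      ((1 - PowerSeries.X) ^ a * (1 - PowerSeries.C (R := K) q * PowerSeries.X) ^ b *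
        ((1 - PowerSeries.X) * (1 - PowerSeries.C (R := K) q * PowerSeries.X) -
          PowerSeries.C (R := K) x * PowerSeries.X ^ 2)) =
    (1 - PowerSeries.X) * (1 - PowerSeries.C (R := K) q * PowerSeries.X) := by
  change hhDoubleSum q x a b * _ = _
  calc _ = (1 - X) ^ a * (1 - C q * X) ^ b *
        (hhDoubleSum q x a b * ((1 - X) * (1 - C q * X) - C x * X ^ 2)) := by ring
    _ = (mk 1 * (1 - X)) ^ a * ((mk fun n => q ^ n) * (1 - C q * X)) ^ b *
        ((1 - X) * (1 - C q * X)) := by rw [hhDoubleSum_mul, mul_pow, mul_pow]; ring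
    _ = _ := by
      rw [mk_one_mul_one_sub_eq_one, mk_pow_mul_one_sub_C_mul_X_eq_one, one_pow, one_pow, one_mul,
        one_mul]
end

section
/- For non-negative integers a=b=1, positive integer l, the formal power series identity ∑_{m≥0} ∑_{k≥0} h_{m-2k}({1}^{k+1},{q}^{k+1}) (q^l/[l]²)^k z^m = ([l]²/[2l]) ( [l+1]/([l]-[l+1]z) - q[l-1]/([l]-q[l-1]z) ) holds over ℚ(q). -/
/-- The q-integer `[n] = (1-q^n)/(1-q)`. -/
noncomputable def qint {K : Type*} [Field K] (q : K) (n : ℕ) : K := (1 - q ^ n) / (1 - q)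

/-!
With `E = 1/((1-z)(1-qz)) = ∑ₙ hₙ(1,q) zⁿ` we have `hₙ({1}^r,{q}^r) = [zⁿ] E^r`, so the
left side is `∑ₖ tᵏ z^{2k} E^{k+1} = E/(1 - t z² E) = 1/((1-z)(1-qz) - t z²)`, which is
checked X-adically against the partial geometric sums. For `t = q^l/[l]²` the denominator is
`([l] - [l+1]z)([l] - q[l-1]z)/[l]²`, and partial fractions together with
`[l]([l+1] - q[l-1]) = [l](1 + q^l) = [2l]` give the right side.
-/

open PowerSeries

/-- The generating function `1/((1-X)(1-qX))` of `hₙ(1, q)`. -/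
noncomputable def hhGen {R : Type*} [CommSemiring R] (q : R) : R⟦X⟧ :=
  (mk fun _ => (1 : R)) * mk fun k => q ^ k

theorem hh_diag_eq_coeff_pow {R : Type*} [CommSemiring R] (q : R) (r n : ℕ) :
    hh q r r n = coeff n (hhGen q ^ r) := by
  rw [hh, hhGen, mul_pow]

section CommRing
variable {R : Type*} [CommRing R]

theorem mk_pow_mul_one_sub_C_mul_X (c : R) : (mk fun k => c ^ k) * (1 - C c * X) = 1 := by
  simpa [rescale_mk, rescale_X] using congrArg (rescale c) (mk_one_mul_one_sub_eq_one (S := R))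

/-- The series `∑ₖ tᵏ X^{2k} E^{k+1}`. -/
noncomputable def evenGeomSeries (E : R⟦X⟧) (t : R) : R⟦X⟧ :=
  mk fun m => ∑ k ∈ Finset.range (m / 2 + 1), t ^ k * coeff (m - 2 * k) (E ^ (k + 1))

theorem X_pow_dvd_evenGeomSeries_sub (E : R⟦X⟧) (t : R) (N : ℕ) :
    X ^ (2 * N) ∣ evenGeomSeries E t - (∑ k ∈ Finset.range N, (C t * X ^ 2 * E) ^ k) * E := by
  have hterm (k m : ℕ) : coeff m ((C t * X ^ 2 * E) ^ k * E) =
      if 2 * k ≤ m then t ^ k * coeff (m - 2 * k) (E ^ (k + 1)) else 0 := by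
    rw [show (C t * X ^ 2 * E) ^ k * E = C (t ^ k) * E ^ (k + 1) * X ^ (2 * k) by
      rw [map_pow, pow_mul]; ring, coeff_mul_X_pow', coeff_C_mul]
  refine X_pow_dvd_iff.mpr fun m hm => ?_
  rw [map_sub, evenGeomSeries, coeff_mk, Finset.sum_mul, map_sum]
  simp only [hterm]
  rw [← Finset.sum_filter, sub_eq_zero]
  congr 1
  ext k
  simp only [Finset.mem_filter, Finset.mem_range]
  omega

theorem evenGeomSeries_mul_sub_eq_one {E G : R⟦X⟧} (hEG : E * G = 1) (t : R) :
    evenGeomSeries E t * (G - C t * X ^ 2) = 1 := by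
  set x := C t * X ^ 2 * E
  have hG : G - C t * X ^ 2 = G * (1 - x) := by
    linear_combination (C t * X ^ 2) * hEG
  have hpartial (N : ℕ) :
      (∑ k ∈ Finset.range N, x ^ k) * E * (G - C t * X ^ 2) = 1 - x ^ N := by
    rw [hG, ← geom_sum_mul_neg]
    linear_combination (∑ k ∈ Finset.range N, x ^ k) * (1 - x) * hEG
  have hxN (N : ℕ) : X ^ (2 * N) ∣ x ^ N := ⟨(C t * E) ^ N, by rw [pow_mul]; ring⟩
  ext m
  have hdvd : X ^ (2 * (m + 1)) ∣ evenGeomSeries E t * (G - C t * X ^ 2) - 1 := by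
    have hsplit : evenGeomSeries E t * (G - C t * X ^ 2) - 1 =
        (evenGeomSeries E t - (∑ k ∈ Finset.range (m + 1), x ^ k) * E) * (G - C t * X ^ 2)
          - x ^ (m + 1) := by
      rw [sub_mul, hpartial]; ring
    rw [hsplit]
    exact dvd_sub (dvd_mul_of_dvd_left (X_pow_dvd_evenGeomSeries_sub E t _) _) (hxN _)
  rw [← sub_eq_zero, ← map_sub]
  exact X_pow_dvd_iff.mp hdvd m (by omega)

theorem hhGen_mul_eq_one (q : R) : hhGen q * ((1 - X) * (1 - C q * X)) = 1 := by
  calc _ = ((mk fun _ => (1 : R)) * (1 - X)) * ((mk fun k => q ^ k) * (1 - C q * X)) := by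
        rw [hhGen]; ring
    _ = 1 := by
      rw [show (mk fun _ => (1 : R)) * (1 - X) = 1 from mk_one_mul_one_sub_eq_one R,
        mk_pow_mul_one_sub_C_mul_X, one_mul]

end CommRing

section Field
variable {K : Type*} [Field K]

theorem qint_add_succ_succ (q : K) (n : ℕ) :
    qint q (n + 2) + q * qint q n = (1 + q) * qint q (n + 1) := by
  simp only [qint]; ring

theorem qint_mul_succ_succ {q : K} (hq : q ≠ 1) (n : ℕ) :
    qint q (n + 2) * (q * qint q n) = q * qint q (n + 1) ^ 2 - q ^ (n + 1) := by
  have : 1 - q ≠ 0 := sub_ne_zero.mpr hq.symm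
  simp only [qint]; field_simp; ring

theorem qint_sub_succ_succ {q : K} (hq : q ≠ 1) (n : ℕ) :
    qint q (n + 2) - q * qint q n = 1 + q ^ (n + 1) := by
  have : 1 - q ≠ 0 := sub_ne_zero.mpr hq.symm
  simp only [qint]; field_simp; ring

theorem qint_two_mul (q : K) (n : ℕ) : qint q (2 * n) = qint q n * (1 + q ^ n) := by
  simp only [qint]; ring

theorem qint_factorization {q : K} (hq : q ≠ 1) (n : ℕ) :
    (C (qint q (n + 1)) - C (qint q (n + 2)) * X) * (C (qint q (n + 1)) - C (q * qint q n) * X) =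
      C (qint q (n + 1) ^ 2) * ((1 - X) * (1 - C q * X)) - C (q ^ (n + 1)) * X ^ 2 := by
  have hsum := congrArg C (qint_add_succ_succ q n)
  have hprod := congrArg C (qint_mul_succ_succ hq n)
  simp only [map_add, map_sub, map_mul, map_pow, map_one] at hsum hprod ⊢
  linear_combination (-(C (qint q (n + 1))) * X) * hsum + X ^ 2 * hprod

theorem C_mul_inv_sub_C_mul_inv {a : K} (ha : a ≠ 0) (b c : K) :
    C b * (C a - C b * X)⁻¹ - C c * (C a - C c * X)⁻¹ =
      C (a * (b - c)) * ((C a - C b * X) * (C a - C c * X))⁻¹ := by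
  have hA : constantCoeff (C a - C b * X) ≠ 0 := by simpa using ha
  have hB : constantCoeff (C a - C c * X) ≠ 0 := by simpa using ha
  rw [eq_mul_inv_iff_mul_eq (by simpa using mul_ne_zero ha ha)]
  calc _ = C b * ((C a - C b * X)⁻¹ * (C a - C b * X)) * (C a - C c * X)
        - C c * ((C a - C c * X)⁻¹ * (C a - C c * X)) * (C a - C b * X) := by ring
    _ = C (a * (b - c)) := by
        rw [PowerSeries.inv_mul_cancel _ hA, PowerSeries.inv_mul_cancel _ hB]
        simp only [map_mul, map_sub]; ring

end Field

/-- Lemma, case a = b = 1: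
`∑_{m≥0} ∑_{k≥0} h_{m-2k}({1}^{k+1},{q}^{k+1}) (q^l/[l]²)^k z^m
  = ([l]²/[2l]) ( [l+1]/([l]-[l+1]z) - q[l-1]/([l]-q[l-1]z) )`
as formal power series in `z`. -/
theorem hh_sum_case_a1_b1 {K : Type*} [Field K] (q : K) (hq : q ≠ 1) (l : ℕ) (hl : 1 ≤ l)
    (hql : qint q l ≠ 0) (hq2l : qint q (2 * l) ≠ 0) :
    (PowerSeries.mk fun m =>
        ∑ k ∈ Finset.range (m / 2 + 1),
          (q ^ l / (qint q l) ^ 2) ^ k * hh q (k + 1) (k + 1) (m - 2 * k)) =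
      PowerSeries.C (R := K) ((qint q l) ^ 2 / qint q (2 * l)) *
        (PowerSeries.C (R := K) (qint q (l + 1)) *
            (PowerSeries.C (R := K) (qint q l) - PowerSeries.C (R := K) (qint q (l + 1)) * PowerSeries.X)⁻¹ -
          PowerSeries.C (R := K) (q * qint q (l - 1)) *
            (PowerSeries.C (R := K) (qint q l) -
              PowerSeries.C (R := K) (q * qint q (l - 1)) * PowerSeries.X)⁻¹) := by
  obtain ⟨n, rfl⟩ : ∃ n, l = n + 1 := ⟨l - 1, by omega⟩
  have hL2 : qint q (n + 1) ^ 2 ≠ 0 := pow_ne_zero 2 hql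
  rw [Nat.add_sub_cancel, C_mul_inv_sub_C_mul_inv hql, qint_sub_succ_succ hq, ← qint_two_mul,
    ← mul_assoc, ← map_mul, div_mul_cancel₀ _ hq2l, qint_factorization hq,
    eq_mul_inv_iff_mul_eq (by simpa using hL2)]
  have hS := evenGeomSeries_mul_sub_eq_one (hhGen_mul_eq_one q)
    (q ^ (n + 1) / qint q (n + 1) ^ 2)
  simp only [evenGeomSeries, ← hh_diag_eq_coeff_pow] at hS
  rw [show C (q ^ (n + 1)) = C (qint q (n + 1) ^ 2) * C (q ^ (n + 1) / qint q (n + 1) ^ 2) by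
      rw [← map_mul, mul_div_cancel₀ _ hL2], mul_assoc, ← mul_sub, mul_left_comm, hS, mul_one]
end
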